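/- For all z, w ∈ ℂ the series ∑_{m=0}^∞ ψ^s_m(z) · conj(ψ^s_m(w)) converges and equals the reproducing kernel K^s(z,w) = ((1 − s²)/(2πs)) · exp(−α(z² + conj(w)²) + ν z conj(w)). -/

import Mathlib

open MeasureTheory Complex

/-- Physicists' Hermite polynomial `H_m`, as an entire function on `ℂ`:
`H_m(z) = (-1)^m e^{z²} (d/dz)^m e^{-z²}`. -/
noncomputable def Hpoly (m : ℕ) (z : ℂ) : ℂ :=
  (-1 : ℂ) ^ m * Complex.exp (z ^ 2) * iteratedDeriv m (fun w => Complex.exp (-w ^ 2)) z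

/-- `ψ^s_m(z) = ((1-s)/(π√s))^{1/2} ((1-s)/(1+s))^{m/2} (2^m m!)^{-1/2} e^{-z²/2} H_m(z)`. -/
noncomputable def psiS (s : ℝ) (m : ℕ) (z : ℂ) : ℂ :=
  (Real.sqrt ((1 - s) / (Real.pi * Real.sqrt s)) : ℂ)
    * (Real.sqrt (((1 - s) / (1 + s)) ^ m) : ℂ)
    * (1 / (Real.sqrt ((2 : ℝ) ^ m * m.factorial) : ℂ))
    * Complex.exp (-z ^ 2 / 2) * Hpoly m z

/-- Reproducing kernel `K^s(z,w) = ((1-s²)/(2πs)) exp(-α(z² + conj w²) + ν z conj w)`. -/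
noncomputable def Kker (s : ℝ) (z w : ℂ) : ℂ :=
  (((1 - s ^ 2) / (2 * Real.pi * s) : ℝ) : ℂ) *
    Complex.exp (-(((1 + s ^ 2) / (4 * s) : ℝ) : ℂ) * (z ^ 2 + (starRingEnd ℂ w) ^ 2)
      + (((1 - s ^ 2) / (2 * s) : ℝ) : ℂ) * z * starRingEnd ℂ w)

/-!
With `t = (1 - s) / (1 + s)` the `m`-th summand is
`(1 - s) / (π √s) · e^{-(z² + w̄²)/2} · tᵐ / (2ᵐ m!) · H_m(z) H_m(w̄)`, so the claim is
Mehler's formula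
`∑ tᵐ / (2ᵐ m!) H_m(z) H_m(y) = (1 - t²)^{-1/2} exp ((2zyt - (z² + y²) t²) / (1 - t²))`
followed by algebra in `s`.

Mehler's formula comes from the integral representation `√π H_m(z) = 2ᵐ ∫ (z + iu)ᵐ e^{-u²} du`
(both sides satisfy the three-term recurrence, the integral by an integration by parts).
Inserting it for `H_m(z)`, the sum under the integral is the generating function
`∑ H_m(y) rᵐ / m! = exp (2yr - r²)` at `r = t (z + iu)`, and what is left is a Gaussian integral.
Summing under the integral sign is justified by `|H_m(y)| ≤ C (2/c)ᵐ √(m!)` for `c < √2`, a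
consequence of `xᵐ ≤ √(m!) e^{x²/2}`: with `c² = 1 + |t|` the majorant is a geometric series.
-/

open Real

section HermitePolynomial

open Polynomial

noncomputable def physHermite : ℕ → ℂ[X]
  | 0 => 1
  | n + 1 => 2 * X * physHermite n - derivative (physHermite n)

lemma derivative_physHermite (n : ℕ) :
    derivative (physHermite n) = 2 * n * physHermite (n - 1) := by
  induction n using Nat.twoStepInduction with
  | zero => simp [physHermite]
  | one => simp [physHermite]
  | more n _ ih =>
    rw [Nat.add_sub_cancel] at ih
    rw [physHermite, derivative_sub, derivative_mul, derivative_mul, ih, derivative_mul,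
      derivative_mul, show n + 2 - 1 = n + 1 from rfl, physHermite]
    simp only [derivative_ofNat, derivative_natCast, derivative_X]
    push_cast
    ring

lemma hasDerivAt_cexp_neg_sq (z : ℂ) :
    HasDerivAt (fun w : ℂ => cexp (-w ^ 2)) (-2 * z * cexp (-z ^ 2)) z := by
  refine ((hasDerivAt_pow 2 z).fun_neg).cexp.congr_deriv ?_
  norm_num
  ring

lemma iteratedDeriv_cexp_neg_sq (m : ℕ) (z : ℂ) :
    iteratedDeriv m (fun w => cexp (-w ^ 2)) z
      = (-1) ^ m * cexp (-z ^ 2) * (physHermite m).eval z := by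
  induction m generalizing z with
  | zero => simp [physHermite]
  | succ n ih =>
    have hd := ((hasDerivAt_const z ((-1 : ℂ) ^ n)).fun_mul
      (hasDerivAt_cexp_neg_sq z)).fun_mul ((physHermite n).hasDerivAt z)
    rw [iteratedDeriv_succ, funext ih, hd.deriv, physHermite]
    simp only [eval_sub, eval_mul, eval_ofNat, eval_X]
    ring

lemma Hpoly_eq_eval (m : ℕ) (z : ℂ) : Hpoly m z = (physHermite m).eval z := by
  rw [Hpoly, iteratedDeriv_cexp_neg_sq, ← mul_assoc, mul_mul_mul_comm, ← mul_pow,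
    ← Complex.exp_add]
  simp

lemma Hpoly_zero (z : ℂ) : Hpoly 0 z = 1 := by
  simp [Hpoly_eq_eval, physHermite]

lemma Hpoly_succ (n : ℕ) (z : ℂ) :
    Hpoly (n + 1) z = 2 * z * Hpoly n z - 2 * n * Hpoly (n - 1) z := by
  simp only [Hpoly_eq_eval, physHermite, derivative_physHermite, eval_sub, eval_mul, eval_ofNat,
    eval_natCast, eval_X]

lemma map_conj_physHermite (m : ℕ) : (physHermite m).map (starRingEnd ℂ) = physHermite m := by
  induction m with
  | zero => simp [physHermite]
  | succ n ih =>
    simp only [physHermite, Polynomial.map_sub, Polynomial.map_mul, ← derivative_map, ih, map_X,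
      Polynomial.map_ofNat]

lemma conj_Hpoly (m : ℕ) (w : ℂ) : starRingEnd ℂ (Hpoly m w) = Hpoly m (starRingEnd ℂ w) := by
  rw [Hpoly_eq_eval, Hpoly_eq_eval, ← eval₂_hom, ← eval_map, map_conj_physHermite]

end HermitePolynomial

lemma hasSum_Hpoly_mul_pow_div_factorial (y r : ℂ) :
    HasSum (fun m => Hpoly m y * r ^ m / m.factorial) (cexp (2 * y * r - r ^ 2)) := by
  have hf : Differentiable ℂ fun w : ℂ => cexp (-w ^ 2) :=
    fun z => (hasDerivAt_cexp_neg_sq z).differentiableAt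
  have h := (Complex.hasSum_taylorSeries_of_entire hf y (y - r)).mul_left (cexp (y ^ 2))
  rw [← Complex.exp_add, show y ^ 2 + -(y - r) ^ 2 = 2 * y * r - r ^ 2 by ring] at h
  refine h.congr_fun fun m => ?_
  rw [Hpoly, iteratedDeriv_cexp_neg_sq, smul_eq_mul, smul_eq_mul, sub_sub_cancel_left, neg_pow]
  ring

lemma pow_le_sqrt_factorial_mul_exp (x : ℝ) (m : ℕ) :
    x ^ m ≤ √(m.factorial) * rexp (x ^ 2 / 2) := by
  rw [exp_half, ← sqrt_mul (Nat.cast_nonneg _)]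
  refine le_sqrt_of_sq_le ?_
  have h := pow_div_factorial_le_exp _ (sq_nonneg x) m
  rw [div_le_iff₀ (by positivity)] at h
  linarith [pow_right_comm x 2 m]

lemma pow_mul_exp_neg_sq_le {c : ℝ} (hc : 0 < c) (x u : ℝ) (m : ℕ) :
    x ^ m * rexp (-u ^ 2) ≤ √(m.factorial) / c ^ m * rexp (c ^ 2 / 2 * x ^ 2 - u ^ 2) := by
  have h := pow_le_sqrt_factorial_mul_exp (c * x) m
  rw [mul_pow, ← le_div_iff₀' (by positivity)] at h
  calc x ^ m * rexp (-u ^ 2)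
      ≤ √(m.factorial) * rexp ((c * x) ^ 2 / 2) / c ^ m * rexp (-u ^ 2) := by gcongr
    _ = √(m.factorial) / c ^ m * rexp (c ^ 2 / 2 * x ^ 2 - u ^ 2) := by
      rw [sub_eq_add_neg, Real.exp_add]
      ring_nf

lemma integrable_exp_mul_add_abs_sq_sub_sq {κ : ℝ} (hκ : κ < 1) (A : ℝ) :
    Integrable fun u : ℝ => rexp (κ * (A + |u|) ^ 2 - u ^ 2) := by
  have hε : 0 < 1 - κ := by linarith
  refine ((integrable_exp_neg_mul_sq (half_pos hε)).const_mul
    (rexp (κ * A ^ 2 + 2 * κ ^ 2 * A ^ 2 / (1 - κ)))).mono' (by fun_prop) ?_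
  refine ae_of_all _ fun u => ?_
  rw [norm_of_nonneg (exp_nonneg _), ← Real.exp_add, exp_le_exp]
  have hgap : κ * A ^ 2 + 2 * κ ^ 2 * A ^ 2 / (1 - κ) + -((1 - κ) / 2) * u ^ 2
      - (κ * (A + |u|) ^ 2 - u ^ 2) = ((1 - κ) * |u| - 2 * κ * A) ^ 2 / (2 * (1 - κ)) := by
    rw [← sq_abs u]
    field_simp
    ring
  linarith [div_nonneg (sq_nonneg ((1 - κ) * |u| - 2 * κ * A)) (by positivity : 0 ≤ 2 * (1 - κ))]

lemma integrable_pow_mul_exp_neg_sq {A : ℝ} (hA : 0 ≤ A) (m : ℕ) :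
    Integrable fun u : ℝ => (A + |u|) ^ m * rexp (-u ^ 2) := by
  refine ((integrable_exp_mul_add_abs_sq_sub_sq (κ := 1 / 2) (by norm_num) A).const_mul
    (√(m.factorial))).mono' (by fun_prop) (ae_of_all _ fun u => ?_)
  rw [norm_of_nonneg (by positivity)]
  simpa using pow_mul_exp_neg_sq_le one_pos (A + |u|) u m

noncomputable def hermiteIntegral (m : ℕ) (z : ℂ) : ℂ :=
  ∫ u : ℝ, (z + u * I) ^ m * cexp (-(u : ℂ) ^ 2)

lemma norm_pow_mul_cexp_neg_sq_le (m : ℕ) (z : ℂ) (u : ℝ) :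
    ‖(z + u * I) ^ m * cexp (-(u : ℂ) ^ 2)‖ ≤ (‖z‖ + |u|) ^ m * rexp (-u ^ 2) := by
  rw [norm_mul, norm_pow, show -(u : ℂ) ^ 2 = ((-u ^ 2 : ℝ) : ℂ) by push_cast; ring,
    norm_exp_ofReal]
  gcongr
  exact (norm_add_le _ _).trans_eq (by simp)

lemma integrable_pow_mul_cexp_neg_sq (m : ℕ) (z : ℂ) :
    Integrable fun u : ℝ => (z + u * I) ^ m * cexp (-(u : ℂ) ^ 2) :=
  (integrable_pow_mul_exp_neg_sq (norm_nonneg z) m).mono' (by fun_prop)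
    (ae_of_all _ (norm_pow_mul_cexp_neg_sq_le m z))

lemma integral_norm_pow_mul_cexp_neg_sq_le {c : ℝ} (hc : 0 < c) (hc2 : c ^ 2 < 2)
    (m : ℕ) (z : ℂ) :
    ∫ u : ℝ, ‖(z + u * I) ^ m * cexp (-(u : ℂ) ^ 2)‖
      ≤ √(m.factorial) / c ^ m * ∫ u : ℝ, rexp (c ^ 2 / 2 * (‖z‖ + |u|) ^ 2 - u ^ 2) := by
  rw [← integral_const_mul]
  exact integral_mono (integrable_pow_mul_cexp_neg_sq m z).norm
    ((integrable_exp_mul_add_abs_sq_sub_sq (by linarith) _).const_mul _)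
    fun u => (norm_pow_mul_cexp_neg_sq_le m z u).trans (pow_mul_exp_neg_sq_le hc _ u m)

lemma hermiteIntegral_zero (z : ℂ) : hermiteIntegral 0 z = √π := by
  have h (u : ℝ) : cexp (-(u : ℂ) ^ 2) = (rexp (-1 * u ^ 2) : ℂ) := by
    push_cast
    ring_nf
  simp_rw [hermiteIntegral, pow_zero, one_mul, h]
  rw [integral_complex_ofReal, integral_gaussian, div_one]

lemma hermiteIntegral_succ (n : ℕ) (z : ℂ) :
    2 * hermiteIntegral (n + 1) z
      = 2 * z * hermiteIntegral n z - n * hermiteIntegral (n - 1) z := by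
  let g (k : ℕ) (u : ℝ) : ℂ := (z + u * I) ^ k * cexp (-(u : ℂ) ^ 2)
  have hint (k : ℕ) : Integrable (g k) := integrable_pow_mul_cexp_neg_sq k z
  -- since `-2u = 2I ((z + uI) - z)`, the derivative of `g n` is a combination of the `g k`
  have hderiv (u : ℝ) :
      HasDerivAt (g n) (I * (n * g (n - 1) u + 2 * g (n + 1) u - 2 * z * g n u)) u := by
    have hlin : HasDerivAt (fun w : ℂ => z + w * I) I u := (hasDerivAt_mul_const I).const_add z
    refine ((hlin.fun_pow n).fun_mul (hasDerivAt_cexp_neg_sq u)).comp_ofReal.congr_deriv ?_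
    linear_combination (-2 * (u : ℂ) * (z + u * I) ^ n * cexp (-(u : ℂ) ^ 2)) * I_sq
  have h0 := integral_eq_zero_of_hasDerivAt_of_integrable hderiv
    (((((hint _).const_mul _).add ((hint _).const_mul _)).sub ((hint _).const_mul _)).const_mul _)
    (hint n)
  rw [integral_const_mul, integral_sub (by fun_prop) (by fun_prop),
    integral_add (by fun_prop) (by fun_prop), integral_const_mul, integral_const_mul,
    integral_const_mul] at h0
  simp only [g] at h0
  unfold hermiteIntegral
  linear_combination (mul_eq_zero.mp h0).resolve_left I_ne_zero

lemma sqrt_pi_mul_Hpoly (m : ℕ) (z : ℂ) : √π * Hpoly m z = 2 ^ m * hermiteIntegral m z := by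
  induction m using Nat.twoStepInduction with
  | zero => simp [Hpoly_zero, hermiteIntegral_zero]
  | one =>
    have h := hermiteIntegral_succ 0 z
    simp only [Hpoly_succ, Hpoly_zero] at *
    linear_combination -h - 2 * z * hermiteIntegral_zero z
  | more n ih0 ih1 =>
    have h := hermiteIntegral_succ (n + 1) z
    rw [Hpoly_succ (n + 1)]
    simp only [Nat.add_sub_cancel, Nat.cast_add, Nat.cast_one] at h ⊢
    linear_combination 2 * z * ih1 - 2 * (n + 1) * ih0 - 2 ^ (n + 1) * h

lemma norm_Hpoly_le {c : ℝ} (hc : 0 < c) (hc2 : c ^ 2 < 2) (m : ℕ) (y : ℂ) :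
    ‖Hpoly m y‖ ≤ (2 / c) ^ m * √(m.factorial) / √π
      * ∫ u : ℝ, rexp (c ^ 2 / 2 * (‖y‖ + |u|) ^ 2 - u ^ 2) := by
  set K := ∫ u : ℝ, rexp (c ^ 2 / 2 * (‖y‖ + |u|) ^ 2 - u ^ 2)
  have h := congrArg norm (sqrt_pi_mul_Hpoly m y)
  rw [norm_mul, norm_mul, norm_pow, norm_real, norm_of_nonneg (sqrt_nonneg _), RCLike.norm_ofNat]
    at h
  have hJ : ‖hermiteIntegral m y‖ ≤ √(m.factorial) / c ^ m * K :=
    (norm_integral_le_integral_norm _).trans (integral_norm_pow_mul_cexp_neg_sq_le hc hc2 m y)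
  rw [div_mul_eq_mul_div, le_div_iff₀ (by positivity), mul_comm, h]
  calc 2 ^ m * ‖hermiteIntegral m y‖ ≤ 2 ^ m * (√(m.factorial) / c ^ m * K) := by gcongr
    _ = (2 / c) ^ m * √(m.factorial) * K := by rw [div_pow]; ring

lemma summable_integral_norm_mehler {t : ℝ} (ht : |t| < 1) (z y : ℂ) :
    Summable fun m : ℕ => ∫ u : ℝ,
      ‖Hpoly m y * (t : ℂ) ^ m / m.factorial * ((z + u * I) ^ m * cexp (-(u : ℂ) ^ 2))‖ := by
  set c := √(1 + |t|)
  have hc : 0 < c := sqrt_pos.mpr (by positivity)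
  have hc2 : c ^ 2 = 1 + |t| := sq_sqrt (by positivity)
  set Ky := ∫ u : ℝ, rexp (c ^ 2 / 2 * (‖y‖ + |u|) ^ 2 - u ^ 2)
  set Kz := ∫ u : ℝ, rexp (c ^ 2 / 2 * (‖z‖ + |u|) ^ 2 - u ^ 2)
  have hq : 2 * |t| / c ^ 2 < 1 := by rw [hc2, div_lt_one (by positivity)]; linarith
  refine ((summable_geometric_of_lt_one (by positivity) hq).mul_right
    (Ky * Kz / √π)).of_nonneg_of_le (fun m => integral_nonneg fun u => norm_nonneg _) fun m => ?_
  have hfact : √(m.factorial) ^ 2 = m.factorial := sq_sqrt (Nat.cast_nonneg _)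
  have hc2' : c ^ 2 < 2 := by linarith
  set a : ℂ := Hpoly m y * (t : ℂ) ^ m / m.factorial
  simp_rw [norm_mul a, integral_const_mul]
  calc ‖a‖ * (∫ u : ℝ, ‖(z + u * I) ^ m * cexp (-(u : ℂ) ^ 2)‖)
      ≤ ((2 / c) ^ m * √(m.factorial) / √π * Ky) * |t| ^ m / m.factorial
        * (√(m.factorial) / c ^ m * Kz) := by
        rw [norm_div, norm_mul, norm_pow, norm_real, Complex.norm_natCast, Real.norm_eq_abs]
        gcongr
        · exact norm_Hpoly_le hc hc2' m y
        · exact integral_norm_pow_mul_cexp_neg_sq_le hc hc2' m z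
    _ = (2 * |t| / c ^ 2) ^ m * (Ky * Kz / √π) := by
        field_simp
        rw [hfact, div_pow, div_pow, mul_pow, ← pow_mul, pow_mul']
        field_simp

noncomputable def mehlerKernel (t : ℝ) (z y : ℂ) : ℂ :=
  (√(1 - t ^ 2) : ℂ)⁻¹ * cexp ((2 * z * y * t - (z ^ 2 + y ^ 2) * t ^ 2) / (1 - t ^ 2))

lemma hasSum_Hpoly_mul_pow_mul_gaussian (t : ℝ) (z y : ℂ) (u : ℝ) :
    HasSum (fun m =>
        Hpoly m y * (t : ℂ) ^ m / m.factorial * ((z + u * I) ^ m * cexp (-(u : ℂ) ^ 2)))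
      (cexp (((t ^ 2 - 1 : ℝ) : ℂ) * u ^ 2 + 2 * t * I * (y - t * z) * u
        + (2 * y * t * z - t ^ 2 * z ^ 2))) := by
  have h := (hasSum_Hpoly_mul_pow_div_factorial y (t * (z + u * I))).mul_right
    (cexp (-(u : ℂ) ^ 2))
  have hexp : 2 * y * (t * (z + u * I)) - (t * (z + u * I)) ^ 2 + -(u : ℂ) ^ 2
      = ((t ^ 2 - 1 : ℝ) : ℂ) * u ^ 2 + 2 * t * I * (y - t * z) * u
        + (2 * y * t * z - t ^ 2 * z ^ 2) := by
    push_cast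
    linear_combination (-(t : ℂ) ^ 2 * (u : ℂ) ^ 2) * I_sq
  rw [← Complex.exp_add, hexp] at h
  exact h.congr_fun fun m => by rw [mul_pow]; ring

lemma integral_cexp_quadratic_mehler {t : ℝ} (ht : |t| < 1) (z y : ℂ) :
    ∫ u : ℝ, cexp (((t ^ 2 - 1 : ℝ) : ℂ) * u ^ 2 + 2 * t * I * (y - t * z) * u
        + (2 * y * t * z - t ^ 2 * z ^ 2)) = √π * mehlerKernel t z y := by
  have ht2 : 0 < 1 - t ^ 2 := by nlinarith [sq_abs t, abs_nonneg t]
  have hb : -((t ^ 2 - 1 : ℝ) : ℂ) = ((1 - t ^ 2 : ℝ) : ℂ) := by push_cast; ring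
  have hpow : ((π : ℂ) / ((1 - t ^ 2 : ℝ) : ℂ)) ^ (1 / 2 : ℂ) = ((√π / √(1 - t ^ 2) : ℝ) : ℂ) := by
    rw [← ofReal_div, ← sqrt_div' _ ht2.le, sqrt_eq_rpow, ofReal_cpow (div_pos pi_pos ht2).le]
    norm_num
  have hne : (1 : ℂ) - t ^ 2 ≠ 0 := by exact_mod_cast ht2.ne'
  rw [integral_cexp_quadratic (by rw [ofReal_re]; linarith), hb, hpow, mehlerKernel, ofReal_div,
    div_eq_mul_inv, mul_assoc]
  congr 3
  push_cast
  rw [show (t : ℂ) ^ 2 - 1 = -(1 - t ^ 2) by ring]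
  field_simp
  linear_combination (4 * (t : ℂ) ^ 2 * (y - t * z) ^ 2) * I_sq

theorem hasSum_mehler {t : ℝ} (ht : |t| < 1) (z y : ℂ) :
    HasSum (fun m : ℕ => (t : ℂ) ^ m / (2 ^ m * m.factorial) * (Hpoly m z * Hpoly m y))
      (mehlerKernel t z y) := by
  have hsum := hasSum_integral_of_summable_integral_norm
    (fun m => (integrable_pow_mul_cexp_neg_sq m z).const_mul _)
    (summable_integral_norm_mehler ht z y)
  rw [funext fun u => (hasSum_Hpoly_mul_pow_mul_gaussian t z y u).tsum_eq,
    integral_cexp_quadratic_mehler ht] at hsum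
  have hπ : (√π : ℂ) ≠ 0 := by exact_mod_cast (sqrt_pos.mpr pi_pos).ne'
  have h := hsum.mul_left (√π : ℂ)⁻¹
  rw [inv_mul_cancel_left₀ hπ] at h
  refine h.congr_fun fun m => ?_
  rw [integral_const_mul, eq_inv_mul_iff_mul_eq₀ hπ]
  change _ = _ * hermiteIntegral m z
  rw [← mul_div_cancel_left₀ (hermiteIntegral m z) (pow_ne_zero m two_ne_zero),
    ← sqrt_pi_mul_Hpoly]
  field_simp

lemma conj_psiS (s : ℝ) (m : ℕ) (w : ℂ) :
    starRingEnd ℂ (psiS s m w) = psiS s m (starRingEnd ℂ w) := by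
  simp only [psiS, map_mul, map_div₀, map_one, conj_ofReal, conj_Hpoly, ← Complex.exp_conj, map_neg,
    map_pow, map_ofNat]

lemma psiS_mul_psiS {s : ℝ} (hs0 : 0 ≤ s) (hs1 : s ≤ 1) (m : ℕ) (z y : ℂ) :
    psiS s m z * psiS s m y = ((1 - s) / (π * √s) : ℝ) * cexp (-(z ^ 2 + y ^ 2) / 2)
      * ((((1 - s) / (1 + s) : ℝ) : ℂ) ^ m / (2 ^ m * m.factorial) * (Hpoly m z * Hpoly m y)) := by
  have hsq {a : ℝ} (ha : 0 ≤ a) : ((√a : ℝ) : ℂ) * (√a : ℝ) = a := by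
    rw [← ofReal_mul, mul_self_sqrt ha]
  have hA := hsq (a := (1 - s) / (π * √s)) (by have := pi_pos; positivity)
  have hB := hsq (a := ((1 - s) / (1 + s)) ^ m) (by positivity)
  have hC := hsq (a := 2 ^ m * m.factorial) (by positivity)
  have hC0 : ((√(2 ^ m * m.factorial : ℝ) : ℝ) : ℂ) ≠ 0 := by
    rw [ofReal_ne_zero]; positivity
  calc psiS s m z * psiS s m y
      = ((√((1 - s) / (π * √s)) : ℝ) : ℂ) * (√((1 - s) / (π * √s)) : ℝ)
        * (((√(((1 - s) / (1 + s)) ^ m) : ℝ) : ℂ) * (√(((1 - s) / (1 + s)) ^ m) : ℝ))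
        / (((√(2 ^ m * m.factorial : ℝ) : ℝ) : ℂ) * (√(2 ^ m * m.factorial : ℝ) : ℝ))
        * (cexp (-z ^ 2 / 2) * cexp (-y ^ 2 / 2)) * (Hpoly m z * Hpoly m y) := by
        simp only [psiS]
        field_simp
    _ = _ := by
        rw [hA, hB, hC, ← Complex.exp_add]
        push_cast
        ring_nf

lemma Kker_eq_mul_mehlerKernel {s t : ℝ} (hs0 : 0 < s) (ht : t = (1 - s) / (1 + s)) (z w : ℂ) :
    Kker s z w = ((1 - s) / (π * √s) : ℝ) * cexp (-(z ^ 2 + (starRingEnd ℂ w) ^ 2) / 2)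
      * mehlerKernel t z (starRingEnd ℂ w) := by
  have hs : (0 : ℝ) < 1 + s := by linarith
  have hsqrt : √(1 - t ^ 2) = 2 * √s / (1 + s) := by
    have h4 : (2 * √s) ^ 2 = 4 * s := by rw [mul_pow, sq_sqrt hs0.le]; norm_num
    rw [show 1 - t ^ 2 = (2 * √s / (1 + s)) ^ 2 by
      rw [div_pow (2 * √s), h4, ht]; field_simp; ring]
    exact sqrt_sq (by positivity)
  have hconst : (1 - s) / (π * √s) * (√(1 - t ^ 2))⁻¹ = (1 - s ^ 2) / (2 * π * s) := by
    rw [hsqrt, inv_div]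
    field_simp
    rw [sq_sqrt hs0.le]
    ring
  have hexp : -(z ^ 2 + (starRingEnd ℂ w) ^ 2) / 2 + (2 * z * starRingEnd ℂ w * t
        - (z ^ 2 + (starRingEnd ℂ w) ^ 2) * t ^ 2) / (1 - t ^ 2)
      = -(((1 + s ^ 2) / (4 * s) : ℝ) : ℂ) * (z ^ 2 + (starRingEnd ℂ w) ^ 2)
        + (((1 - s ^ 2) / (2 * s) : ℝ) : ℂ) * z * starRingEnd ℂ w := by
    have hs0' : (s : ℂ) ≠ 0 := by exact_mod_cast hs0.ne'
    have hs' : (1 + s : ℂ) ≠ 0 := by exact_mod_cast hs.ne'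
    have h1t : 1 - ((1 - s) / (1 + s) : ℂ) ^ 2 = 4 * s / (1 + s) ^ 2 := by
      field_simp
      ring
    rw [ht]
    push_cast
    rw [h1t]
    field_simp
    ring
  rw [Kker, mehlerKernel, ← hconst, mul_mul_mul_comm, ← Complex.exp_add, hexp]
  push_cast
  ring

/-- The series `∑ ψ^s_m(z) conj (ψ^s_m(w))` converges to the reproducing kernel `K^s(z,w)`. -/
theorem statement3 (s : ℝ) (hs0 : 0 < s) (hs1 : s < 1) (z w : ℂ) :
    HasSum (fun m : ℕ => psiS s m z * (starRingEnd ℂ) (psiS s m w)) (Kker s z w) := by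
  have hs : 0 < 1 + s := by linarith
  have ht : |(1 - s) / (1 + s)| < 1 :=
    abs_lt.mpr ⟨by rw [lt_div_iff₀ hs]; linarith, by rw [div_lt_one hs]; linarith⟩
  have h := (hasSum_mehler ht z (starRingEnd ℂ w)).mul_left
    (((1 - s) / (π * √s) : ℝ) * cexp (-(z ^ 2 + (starRingEnd ℂ w) ^ 2) / 2))
  rw [← Kker_eq_mul_mehlerKernel hs0 rfl] at h
  exact h.congr_fun fun m => by rw [conj_psiS, psiS_mul_psiS hs0.le hs1.le]
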